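/- Let B : ℝ^{1+n} → ℝ^{(1+n)×(1+n)} be a compactly supported smooth symmetric matrix field with Σ_k ∂_k B_{jk} = 0 for all j, and suppose that for every ξ ∈ ℝ^{1+n} \ {0} and every unit vector μ ⊥ ξ the Fourier transform satisfies B̂(ξ) : (ξ ⊗ ξ + |ξ|² μ ⊗ μ) = 0. Then B = 0. -/

import Mathlib

/-!
On the Fourier side the hypotheses become linear algebra at each frequency `ξ ≠ 0`:
integrating by parts, `div B = 0` says that the symmetric matrix `b = B̂(ξ)` annihilates `ξ`,
so `b : ξ ⊗ ξ = 0` and the second hypothesis reduces to `b : μ ⊗ μ = 0` for every `μ ⊥ ξ`.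
By polarization `b` vanishes on `ξ^⊥ × ξ^⊥`, and since it also kills `ξ`, `b = 0`.
Thus `B̂` vanishes off the origin, a null set, and Fourier inversion gives `B = 0`.
-/

open MeasureTheory

/-- Partial derivative in the `j`-th coordinate direction. -/
noncomputable def pd {m : ℕ} {E : Type*} [NormedAddCommGroup E] [NormedSpace ℝ E]
    (j : Fin m) (f : (Fin m → ℝ) → E) (x : Fin m → ℝ) : E :=
  fderiv ℝ f x (Pi.single j 1)

open Complex Matrix FourierTransform

section Algebra

variable {ι M : Type*} [Fintype ι] [AddCommGroup M] [Module ℝ M]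

theorem LinearMap.eq_zero_of_apply_self_eq_zero_on_orthogonal
    {β : (ι → ℝ) →ₗ[ℝ] (ι → ℝ) →ₗ[ℝ] M} (hβ : ∀ x y, β x y = β y x) {ξ : ι → ℝ}
    (hξ : ∀ x, β x ξ = 0) (horth : ∀ μ, ξ ⬝ᵥ μ = 0 → β μ μ = 0) : β = 0 := by
  -- `P` is the orthogonal projection onto `ξ^⊥` (the identity when `ξ = 0`, as `0 / 0 = 0`).
  set P : (ι → ℝ) → (ι → ℝ) := fun v => v - ((ξ ⬝ᵥ v) / (ξ ⬝ᵥ ξ)) • ξ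
  have hP : ∀ v, ξ ⬝ᵥ P v = 0 := fun v => by
    by_cases h : ξ ⬝ᵥ ξ = 0
    · simp [P, dotProduct_self_eq_zero.mp h]
    · simp [P, dotProduct_sub, dotProduct_smul, div_mul_cancel₀ _ h]
  have hβP : ∀ v w, β (P v) w = β v w := fun v w => by simp [P, hβ ξ, hξ]
  have hpolar : ∀ v w, β (P v) (P w) + β (P w) (P v) = 0 := fun v w => by
    have := horth (P v + P w) (by rw [dotProduct_add, hP, hP, add_zero])
    simpa [horth _ (hP v), horth _ (hP w)] using this
  ext x y
  have h := hpolar y x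
  rw [hβ (P x)] at h
  rw [LinearMap.zero_apply, LinearMap.zero_apply, ← hβP, hβ, ← hβP]
  linear_combination (norm := module) (1 / 2 : ℝ) • h

theorem LinearMap.apply_self_eq_zero_of_forall_unit {β : (ι → ℝ) →ₗ[ℝ] (ι → ℝ) →ₗ[ℝ] M} {ξ : ι → ℝ}
    (h : ∀ μ, ξ ⬝ᵥ μ = 0 → μ ⬝ᵥ μ = 1 → β μ μ = 0) (μ : ι → ℝ) (hμ : ξ ⬝ᵥ μ = 0) :
    β μ μ = 0 := by
  obtain rfl | hμ0 := eq_or_ne μ 0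
  · simp
  have hpos : 0 < μ ⬝ᵥ μ := by simpa using dotProduct_self_star_pos_iff.2 hμ0
  set c := √(μ ⬝ᵥ μ)
  have hc : c ≠ 0 := (Real.sqrt_pos.2 hpos).ne'
  have hunit := h (c⁻¹ • μ) (by simp [dotProduct_smul, hμ])
    (by simp [dotProduct_smul, smul_dotProduct, ← mul_assoc, ← sq, c, Real.sq_sqrt hpos.le,
      hpos.ne'])
  simpa [hc] using hunit

variable [DecidableEq ι]

theorem Matrix.toLinearMap₂'_comm {b : Matrix ι ι M} (hb : ∀ j k, b j k = b k j)
    (x y : ι → ℝ) : Matrix.toLinearMap₂' ℝ b x y = Matrix.toLinearMap₂' ℝ b y x := by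
  simp only [Matrix.toLinearMap₂'_apply]
  rw [Finset.sum_comm]
  simp_rw [hb, smul_comm (x _)]

theorem Matrix.toLinearMap₂'_apply_eq_zero {b : Matrix ι ι M} {ξ : ι → ℝ}
    (hrow : ∀ j, ∑ k, ξ k • b j k = 0) (x : ι → ℝ) : Matrix.toLinearMap₂' ℝ b x ξ = 0 := by
  simp [Matrix.toLinearMap₂'_apply, ← Finset.smul_sum, hrow]

theorem Matrix.eq_zero_of_symm_of_contract_eq_zero {b : Matrix ι ι M}
    (hb : ∀ j k, b j k = b k j) {ξ : ι → ℝ} (hξ : ξ ≠ 0) (hrow : ∀ j, ∑ k, ξ k • b j k = 0)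
    (hcontract : ∀ μ, ξ ⬝ᵥ μ = 0 → μ ⬝ᵥ μ = 1 →
      Matrix.toLinearMap₂' ℝ b ξ ξ + (ξ ⬝ᵥ ξ) • Matrix.toLinearMap₂' ℝ b μ μ = 0) :
    b = 0 := by
  have hβ := LinearMap.eq_zero_of_apply_self_eq_zero_on_orthogonal
    (Matrix.toLinearMap₂'_comm hb) (Matrix.toLinearMap₂'_apply_eq_zero hrow)
    (LinearMap.apply_self_eq_zero_of_forall_unit fun μ hμ hμ1 => by
      simpa [Matrix.toLinearMap₂'_apply_eq_zero hrow, hξ] using hcontract μ hμ hμ1)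
  exact (Matrix.toLinearMap₂' ℝ).map_eq_zero_iff.1 hβ

theorem Matrix.sum_sum_mul_ofReal_eq (b : Matrix ι ι ℂ) (ξ μ : ι → ℝ) (s : ℝ) :
    ∑ j, ∑ k, b j k * ((ξ j * ξ k + s * μ j * μ k : ℝ) : ℂ) =
      Matrix.toLinearMap₂' ℝ b ξ ξ + s • Matrix.toLinearMap₂' ℝ b μ μ := by
  simp only [Matrix.toLinearMap₂'_apply, Finset.smul_sum, ← Finset.sum_add_distrib]
  refine Finset.sum_congr rfl fun j _ => Finset.sum_congr rfl fun k _ => ?_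
  simp only [Complex.real_smul]
  push_cast
  ring

end Algebra

section Fourier

variable {ι : Type*} [Fintype ι]

noncomputable def fourierKernel (ξ x : ι → ℝ) : ℂ :=
  cexp (-I * ∑ i, (ξ i : ℂ) * (x i : ℂ))

/-- The transform `∫ e^{-i ξ·x} f(x) dx` of the statement; Mathlib's `𝓕` lives on
`EuclideanSpace` and has kernel `e^{-2πi ⟪v, w⟫}`, see `fourier_comp_ofLp`. -/
noncomputable def fourierPi (ξ : ι → ℝ) (f : (ι → ℝ) → ℂ) : ℂ :=
  ∫ x, fourierKernel ξ x * f x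

theorem continuous_fourierKernel (ξ : ι → ℝ) : Continuous (fourierKernel ξ) := by
  unfold fourierKernel
  fun_prop

theorem hasFDerivAt_fourierKernel (ξ x : ι → ℝ) :
    HasFDerivAt (fourierKernel ξ) (fourierKernel ξ x •
      (-I) • ∑ i, (ξ i : ℂ) • (ofRealCLM ∘L ContinuousLinearMap.proj i)) x := by
  set L : (ι → ℝ) →L[ℝ] ℂ := (-I) • ∑ i, (ξ i : ℂ) • (ofRealCLM ∘L ContinuousLinearMap.proj i)
  have hL : ∀ y, L y = -I * ∑ i, (ξ i : ℂ) * (y i : ℂ) := fun y => by simp [L]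
  have h := (L.hasFDerivAt (x := x)).cexp
  simp only [hL] at h
  exact h

theorem fderiv_fourierKernel_single [DecidableEq ι] (ξ x : ι → ℝ) (k : ι) :
    fderiv ℝ (fourierKernel ξ) x (Pi.single k 1) = -I * ξ k * fourierKernel ξ x := by
  rw [(hasFDerivAt_fourierKernel ξ x).fderiv]
  simp [Pi.single_apply, apply_ite ofReal]
  ring

theorem integrable_fourierKernel_mul (ξ : ι → ℝ) {f : (ι → ℝ) → ℂ} (hf : Continuous f)
    (hfc : HasCompactSupport f) : Integrable (fun x => fourierKernel ξ x * f x) :=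
  ((continuous_fourierKernel ξ).mul hf).integrable_of_hasCompactSupport hfc.mul_left

theorem fourier_comp_ofLp (f : (ι → ℝ) → ℂ) (w : EuclideanSpace ℝ ι) :
    𝓕 (fun v : EuclideanSpace ℝ ι => f v) w = fourierPi ((2 * Real.pi) • ⇑w) f := by
  rw [Real.fourier_eq', fourierPi, ← (PiLp.volume_preserving_ofLp ι).integral_comp
    (MeasurableEquiv.toLp 2 (ι → ℝ)).symm.measurableEmbedding]
  congr 1
  ext v
  simp only [fourierKernel, PiLp.inner_apply, smul_eq_mul, Pi.smul_apply]
  congr 2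
  push_cast
  simp only [Finset.mul_sum, Finset.sum_mul, RCLike.inner_apply, conj_trivial]
  exact Finset.sum_congr rfl fun i _ => by push_cast; ring

theorem eq_zero_of_fourier_eq_zero {V E : Type*} [NormedAddCommGroup V] [InnerProductSpace ℝ V]
    [FiniteDimensional ℝ V] [MeasurableSpace V] [BorelSpace V] [Nontrivial V]
    [NormedAddCommGroup E] [NormedSpace ℂ E] [CompleteSpace E] {f : V → E}
    (hf : Continuous f) (hfi : Integrable f) (h : ∀ w ≠ 0, 𝓕 f w = 0) : f = 0 := by
  have hae : 𝓕 f =ᵐ[volume] 0 :=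
    Filter.eventually_of_mem (compl_mem_ae_iff.2 (measure_singleton 0)) h
  funext x
  rw [← hf.fourierInv_fourier_eq hfi ((integrable_zero _ _ _).congr hae.symm),
    Real.fourierInv_eq_fourier_neg, Real.fourier_congr_ae hae]
  simp [Real.fourier_eq]

theorem eq_zero_of_fourierPi_eq_zero [Nonempty ι] {f : (ι → ℝ) → ℂ} (hf : Continuous f)
    (hfi : Integrable f) (h : ∀ ξ ≠ 0, fourierPi ξ f = 0) : f = 0 := by
  have hF := eq_zero_of_fourier_eq_zero (f := fun v : EuclideanSpace ℝ ι => f v)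
    (hf.comp (PiLp.continuous_ofLp 2 _))
    (((PiLp.volume_preserving_ofLp ι).integrable_comp_emb
      (MeasurableEquiv.toLp 2 (ι → ℝ)).symm.measurableEmbedding).2 hfi)
    fun w hw => by
      rw [fourier_comp_ofLp]
      exact h _ (smul_ne_zero (by positivity) (by simpa using hw))
  funext x
  simpa using congrFun hF (WithLp.toLp 2 x)

end Fourier

section PartialDerivative

variable {m : ℕ} {E : Type*} [NormedAddCommGroup E] [NormedSpace ℝ E] {f : (Fin m → ℝ) → E}

theorem ContDiff.continuous_pd (hf : ContDiff ℝ 1 f) (k : Fin m) : Continuous (pd k f) :=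
  (hf.continuous_fderiv one_ne_zero).clm_apply continuous_const

theorem HasCompactSupport.pd (hf : HasCompactSupport f) (k : Fin m) :
    HasCompactSupport (pd k f) :=
  hf.fderiv_apply ℝ _

theorem pd_ofReal {g : (Fin m → ℝ) → ℝ} {x : Fin m → ℝ} (hg : DifferentiableAt ℝ g x)
    (k : Fin m) : pd k (fun y => (g y : ℂ)) x = pd k g x := by
  have h : HasFDerivAt (fun y => (g y : ℂ)) (ofRealCLM ∘L fderiv ℝ g x) x :=
    ofRealCLM.hasFDerivAt.comp x hg.hasFDerivAt
  rw [pd, pd, h.fderiv]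
  rfl

theorem fourierPi_pd (ξ : Fin m → ℝ) {f : (Fin m → ℝ) → ℂ} (hf : ContDiff ℝ 1 f)
    (hfc : HasCompactSupport f) (k : Fin m) :
    fourierPi ξ (pd k f) = I * ξ k * fourierPi ξ f := by
  have hK : ∀ x, fderiv ℝ (fourierKernel ξ) x (Pi.single k 1) = -I * ξ k * fourierKernel ξ x :=
    fun x => fderiv_fourierKernel_single ξ x k
  have hibp := integral_mul_fderiv_eq_neg_fderiv_mul_of_integrable (μ := volume)
    (f := fourierKernel ξ) (g := f) (v := Pi.single k 1) ?_ ?_ ?_ ?_ ?_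
  · simp only [fourierPi, pd, hibp, hK, mul_assoc, integral_const_mul]
    ring
  · simpa only [hK, mul_assoc] using
      ((integrable_fourierKernel_mul ξ hf.continuous hfc).const_mul _).const_mul _
  · exact integrable_fourierKernel_mul ξ (hf.continuous_pd k) (hfc.pd k)
  · exact integrable_fourierKernel_mul ξ hf.continuous hfc
  · exact fun x _ => (hasFDerivAt_fourierKernel ξ x).differentiableAt
  · exact fun x _ => (hf.differentiable one_ne_zero).differentiableAt

theorem sum_smul_fourierPi_eq_zero_of_sum_pd_eq_zero (ξ : Fin m → ℝ)
    {g : Fin m → (Fin m → ℝ) → ℂ} (hg : ∀ k, ContDiff ℝ 1 (g k))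
    (hgc : ∀ k, HasCompactSupport (g k)) (hdiv : ∀ x, ∑ k, pd k (g k) x = 0) :
    ∑ k, ξ k • fourierPi ξ (g k) = 0 := by
  have hI : I * ∑ k, ξ k • fourierPi ξ (g k) = 0 :=
    calc I * ∑ k, ξ k • fourierPi ξ (g k) = ∑ k, fourierPi ξ (pd k (g k)) := by
          simp only [fourierPi_pd ξ (hg _) (hgc _), Finset.mul_sum, Complex.real_smul, mul_assoc]
      _ = ∫ x, ∑ k, fourierKernel ξ x * pd k (g k) x :=
          (integral_finsetSum _ fun k _ =>
            integrable_fourierKernel_mul ξ ((hg k).continuous_pd k) ((hgc k).pd k)).symm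
      _ = 0 := by simp [← Finset.mul_sum, hdiv]
  exact (mul_eq_zero.1 hI).resolve_left I_ne_zero

end PartialDerivative

theorem stmt13 (n : ℕ)
    (B : (Fin (n + 1) → ℝ) → Fin (n + 1) → Fin (n + 1) → ℝ)
    (hsm : ContDiff ℝ (⊤ : ℕ∞) B) (hcs : HasCompactSupport B)
    (hsym : ∀ x j k, B x j k = B x k j)
    (hdiv : ∀ j x, ∑ k, pd k (fun y => B y j k) x = 0)
    (hFT : ∀ ξ : Fin (n + 1) → ℝ, ξ ≠ 0 →
      ∀ μ : Fin (n + 1) → ℝ, (∑ i, ξ i * μ i = 0) → (∑ i, (μ i) ^ 2 = 1) →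
        ∑ j, ∑ k,
          (∫ x : Fin (n + 1) → ℝ,
            Complex.exp (-Complex.I * ∑ i, (ξ i : ℂ) * (x i : ℂ)) * (B x j k : ℂ))
            * ((ξ j * ξ k + (∑ i, (ξ i) ^ 2) * μ j * μ k : ℝ) : ℂ) = 0) :
    B = 0 := by
  have hB1 : ContDiff ℝ 1 B := hsm.of_le (by exact_mod_cast le_top)
  have hBjkℝ : ∀ j k, ContDiff ℝ 1 (fun x => B x j k) := fun j k =>
    (contDiff_apply_apply ℝ ℝ j k).comp hB1
  have hBjk : ∀ j k, ContDiff ℝ 1 (fun x => (B x j k : ℂ)) := fun j k =>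
    ofRealCLM.contDiff.comp (hBjkℝ j k)
  have hBc : ∀ j k, HasCompactSupport (fun x => (B x j k : ℂ)) := fun j k =>
    hcs.comp_left (g := fun v : Fin (n + 1) → Fin (n + 1) → ℝ => (v j k : ℂ)) (by simp)
  set b : (Fin (n + 1) → ℝ) → Matrix (Fin (n + 1)) (Fin (n + 1)) ℂ :=
    fun ξ => Matrix.of fun j k => fourierPi ξ (fun x => (B x j k : ℂ))
  have hrow : ∀ ξ j, ∑ k, ξ k • b ξ j k = 0 := fun ξ j =>
    sum_smul_fourierPi_eq_zero_of_sum_pd_eq_zero ξ (hBjk j) (hBc j) fun x => by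
      simp only [pd_ofReal ((hBjkℝ j _).differentiable one_ne_zero x)]
      exact_mod_cast hdiv j x
  have hb : ∀ ξ ≠ 0, b ξ = 0 := fun ξ hξ =>
    Matrix.eq_zero_of_symm_of_contract_eq_zero (fun j k => by simp [b, hsym]) hξ (hrow ξ)
      fun μ hμ hμ1 => by
        have hsq : ∀ v : Fin (n + 1) → ℝ, v ⬝ᵥ v = ∑ i, v i ^ 2 := fun v => by
          simp [dotProduct, sq]
        rw [hsq, ← Matrix.sum_sum_mul_ofReal_eq]
        exact hFT ξ hξ μ hμ (by rwa [← hsq])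
  funext x j k
  have hzero := eq_zero_of_fourierPi_eq_zero (hBjk j k).continuous
    ((hBjk j k).continuous.integrable_of_hasCompactSupport (hBc j k))
    fun ξ hξ => congrFun (congrFun (hb ξ hξ) j) k
  simpa using congrFun hzero x
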